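/- Let ℓ, λ ∈ ℝ, let κ : ℝ → ℝ be a smooth solution of κ''' + 2ℓκ' − 6κκ' = 0, and let F : ℝ → M₂(ℝ) be smooth with F(s) invertible for all s and F' = F·𝒦_λ, where 𝒦_λ(s) := [[0, κ(s)+λ],[1, 0]] and 𝒫_λ(s) := [[−κ'(s), −κ''(s) + 2κ(s)² − 2λκ(s) − 4λ²],[2κ(s) − 4λ, κ'(s)]]. Put 𝔪 := F(0)·(𝒫_λ(0) − 2ℓ𝒦_λ(0))·F(0)⁻¹ and define F̂(s,t) := exp(t𝔪)·F(s + 2ℓt), where exp is the matrix exponential. Then F̂ is an extended frame for the traveling wave κ(s+2ℓt): ∂ₛF̂(s,t) = F̂(s,t)·𝒦_λ(s+2ℓt) and ∂ₜF̂(s,t) = F̂(s,t)·𝒫_λ(s+2ℓt) for all (s,t). -/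

import Mathlib

noncomputable section

open Matrix

/-! ### Auxiliary lemmas proved with the `L∞`-operator norm instances -/

section AuxLinfty

attribute [local instance] Matrix.linftyOpNormedRing Matrix.linftyOpNormedAlgebra

lemma stmt16_slope_mul {f g : ℝ → Matrix (Fin 2) (Fin 2) ℝ} {f' g' : Matrix (Fin 2) (Fin 2) ℝ}
    {x : ℝ}
    (hf : Filter.Tendsto (slope f x) (nhdsWithin x {x}ᶜ) (nhds f'))
    (hg : Filter.Tendsto (slope g x) (nhdsWithin x {x}ᶜ) (nhds g')) :
    Filter.Tendsto (slope (fun s => f s * g s) x) (nhdsWithin x {x}ᶜ)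
      (nhds (f' * g x + f x * g')) := by
  have Hf : HasDerivAt f f' x := hasDerivAt_iff_tendsto_slope.mpr hf
  have Hg : HasDerivAt g g' x := hasDerivAt_iff_tendsto_slope.mpr hg
  have H := Hf.mul Hg
  rwa [hasDerivAt_iff_tendsto_slope] at H

lemma stmt16_slope_exp (A : Matrix (Fin 2) (Fin 2) ℝ) (t : ℝ) :
    Filter.Tendsto (slope (fun y : ℝ => NormedSpace.exp (y • A)) t) (nhdsWithin t {t}ᶜ)
      (nhds (A * NormedSpace.exp (t • A))) := by
  have H := hasDerivAt_exp_smul_const' (𝕂 := ℝ) A t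
  rwa [hasDerivAt_iff_tendsto_slope] at H

end AuxLinfty

lemma stmt16_exp_comm (A : Matrix (Fin 2) (Fin 2) ℝ) (t : ℝ) :
    A * NormedSpace.exp (t • A) = NormedSpace.exp (t • A) * A := by
  letI : NormedRing (Matrix (Fin 2) (Fin 2) ℝ) := Matrix.linftyOpNormedRing
  letI : NormedAlgebra ℝ (Matrix (Fin 2) (Fin 2) ℝ) := Matrix.linftyOpNormedAlgebra
  exact ((Commute.refl A).smul_right t).exp_right

attribute [local instance] Matrix.normedAddCommGroup Matrix.normedSpace

/-- The space of 2×2 real matrices. -/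
abbrev M2 : Type := Matrix (Fin 2) (Fin 2) ℝ

/-- Partial derivative with respect to `s` of a matrix-valued function. -/
def pdSM (f : ℝ → ℝ → M2) (s t : ℝ) : M2 := deriv (fun x => f x t) s
/-- Partial derivative with respect to `t` of a matrix-valued function. -/
def pdTM (f : ℝ → ℝ → M2) (s t : ℝ) : M2 := deriv (fun y => f s y) t

/-- The matrix `𝒦_λ(s) = [[0, κ(s)+λ],[1, 0]]`. -/
def KL (κ : ℝ → ℝ) (l s : ℝ) : M2 := !![0, κ s + l; 1, 0]

/-- The matrix `𝒫_λ(s) = [[−κ', −κ'' + 2κ² − 2λκ − 4λ²],[2κ − 4λ, κ']]`. -/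
def PL (κ : ℝ → ℝ) (l s : ℝ) : M2 :=
  !![-(deriv κ s), -(deriv (deriv κ) s) + 2 * (κ s) ^ 2 - 2 * l * κ s - 4 * l ^ 2;
     2 * κ s - 4 * l, deriv κ s]

/-- Product rule for `M2`-valued functions of a real variable. -/
lemma stmt16_hasDerivAt_mul {f g : ℝ → M2} {f' g' : M2} {x : ℝ}
    (hf : HasDerivAt f f' x) (hg : HasDerivAt g g' x) :
    HasDerivAt (fun s => f s * g s) (f' * g x + f x * g') x := by
  exact hasDerivAt_iff_tendsto_slope.mpr
    (stmt16_slope_mul (hasDerivAt_iff_tendsto_slope.mp hf) (hasDerivAt_iff_tendsto_slope.mp hg))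

/-- Derivative of `y ↦ exp (y • A)`. -/
lemma stmt16_hasDerivAt_exp (A : M2) (t : ℝ) :
    HasDerivAt (fun y : ℝ => NormedSpace.exp (y • A)) (A * NormedSpace.exp (t • A)) t := by
  exact hasDerivAt_iff_tendsto_slope.mpr (stmt16_slope_exp A t)

/-- Entry-wise differentiation. -/
lemma stmt16_hasDerivAt_entry {f : ℝ → M2} {M : M2} {x : ℝ} (h : HasDerivAt f M x)
    (i j : Fin 2) : HasDerivAt (fun s => f s i j) (M i j) x :=
  hasDerivAt_pi.mp (hasDerivAt_pi.mp h i) j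

/-- Differentiation of a matrix built from entries. -/
lemma stmt16_hasDerivAt_mk {a b c d : ℝ → ℝ} {a' b' c' d' : ℝ} {x : ℝ}
    (ha : HasDerivAt a a' x) (hb : HasDerivAt b b' x) (hc : HasDerivAt c c' x)
    (hd : HasDerivAt d d' x) :
    HasDerivAt (fun s => (!![a s, b s; c s, d s] : M2)) !![a', b'; c', d'] x := by
  refine hasDerivAt_pi.mpr ?_
  intro i
  rw [hasDerivAt_pi]
  intro j
  fin_cases i <;> fin_cases j <;>
    first
      | simpa using ha
      | simpa using hb
      | simpa using hc
      | simpa using hd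

/-- Let `κ` solve `κ''' + 2ℓκ' − 6κκ' = 0` and let `F` be a smooth
pointwise-invertible solution of `F' = F·𝒦_λ`. With
`𝔪 = F(0)·(𝒫_λ(0) − 2ℓ𝒦_λ(0))·F(0)⁻¹`, the map `F̂(s,t) = exp(t𝔪)·F(s+2ℓt)` is an
extended frame for the traveling wave `κ(s+2ℓt)`:
`∂ₛF̂(s,t) = F̂(s,t)·𝒦_λ(s+2ℓt)` and `∂ₜF̂(s,t) = F̂(s,t)·𝒫_λ(s+2ℓt)`. -/
theorem stmt16 (l lam : ℝ) (κ : ℝ → ℝ) (hκ : ContDiff ℝ (⊤ : ℕ∞) κ)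
    (hstat : ∀ s : ℝ,
      deriv (deriv (deriv κ)) s + 2 * l * deriv κ s - 6 * κ s * deriv κ s = 0)
    (F : ℝ → M2) (hF : ContDiff ℝ (⊤ : ℕ∞) F)
    (hinv : ∀ s : ℝ, IsUnit (F s))
    (hode : ∀ s : ℝ, deriv F s = F s * KL κ lam s)
    (𝔪 : M2) (h𝔪 : 𝔪 = F 0 * (PL κ lam 0 - (2 * l) • KL κ lam 0) * (F 0)⁻¹) :
    ∀ s t : ℝ,
      pdSM (fun x y => NormedSpace.exp (y • 𝔪) * F (x + 2 * l * y)) s t =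
        (NormedSpace.exp (t • 𝔪) * F (s + 2 * l * t)) * KL κ lam (s + 2 * l * t) ∧
      pdTM (fun x y => NormedSpace.exp (y • 𝔪) * F (x + 2 * l * y)) s t =
        (NormedSpace.exp (t • 𝔪) * F (s + 2 * l * t)) * PL κ lam (s + 2 * l * t) := by
  -- basic differentiability facts
  have hFd : ∀ x : ℝ, HasDerivAt F (F x * KL κ lam x) x := by
    intro x
    have h : HasDerivAt F (deriv F x) x := (hF.differentiable (by simp) x).hasDerivAt
    rwa [hode x] at h
  have hκd : ∀ x : ℝ, HasDerivAt κ (deriv κ x) x :=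
    fun x => (hκ.differentiable (by simp) x).hasDerivAt
  have hκ' : ContDiff ℝ (⊤ : ℕ∞) κ := hκ.of_le (by simp)
  have hκ1 : ContDiff ℝ (⊤ : ℕ∞) (deriv κ) := (contDiff_infty_iff_deriv.mp hκ').2
  have hκ1d : ∀ x : ℝ, HasDerivAt (deriv κ) (deriv (deriv κ) x) x :=
    fun x => (hκ1.differentiable (by simp) x).hasDerivAt
  have hκ2 : ContDiff ℝ (⊤ : ℕ∞) (deriv (deriv κ)) := (contDiff_infty_iff_deriv.mp hκ1).2
  have hκ2d : ∀ x : ℝ, HasDerivAt (deriv (deriv κ)) (deriv (deriv (deriv κ)) x) x :=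
    fun x => (hκ2.differentiable (by simp) x).hasDerivAt
  -- derivative of Q = PL - 2l • KL is the commutator [Q, K]
  set Q : ℝ → M2 := fun x => PL κ lam x - (2 * l) • KL κ lam x with hQdef
  have hKd : ∀ x : ℝ, HasDerivAt (fun y => KL κ lam y) !![0, deriv κ x; 0, 0] x := by
    intro x
    have h : HasDerivAt (fun y => (!![0, κ y + lam; 1, 0] : M2)) !![0, deriv κ x; 0, 0] x :=
      stmt16_hasDerivAt_mk (hasDerivAt_const x 0) ((hκd x).add_const lam)
        (hasDerivAt_const x 1) (hasDerivAt_const x 0)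
    simpa [KL] using h
  have hPd : ∀ x : ℝ, HasDerivAt (fun y => PL κ lam y)
      !![-(deriv (deriv κ) x),
         -(deriv (deriv (deriv κ)) x) + 2 * (2 * κ x ^ 1 * deriv κ x) - 2 * lam * deriv κ x - 0;
         2 * deriv κ x - 0, deriv (deriv κ) x] x := by
    intro x
    have h := stmt16_hasDerivAt_mk
      (x := x) (hκ1d x).neg
      ((((hκ2d x).neg.add (((hκd x).pow 2).const_mul 2)).sub ((hκd x).const_mul (2 * lam))).sub
        (hasDerivAt_const x (4 * lam ^ 2)))
      (((hκd x).const_mul 2).sub (hasDerivAt_const x (4 * lam)))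
      (hκ1d x)
    simpa [PL, mul_comm, mul_assoc, mul_left_comm] using h
  have hQd : ∀ x : ℝ, HasDerivAt Q (Q x * KL κ lam x - KL κ lam x * Q x) x := by
    intro x
    have h := (hPd x).sub ((hKd x).const_smul (2 * l))
    refine h.congr_deriv ?_
    symm
    have he := hstat x
    ext i j
    fin_cases i <;> fin_cases j <;>
      simp [hQdef, PL, KL, Matrix.mul_apply, Fin.sum_univ_two, Matrix.sub_apply,
          Matrix.smul_apply] <;>
      linarith [he]
  -- the pointwise inverse G and its derivative
  set G : ℝ → M2 := fun x => (F x)⁻¹ with hGdef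
  have hdetU : ∀ x : ℝ, IsUnit (F x).det := fun x => (Matrix.isUnit_iff_isUnit_det _).mp (hinv x)
  have hdet_ne : ∀ x : ℝ, (F x).det ≠ 0 := fun x => (hdetU x).ne_zero
  have hFG : ∀ x : ℝ, F x * G x = 1 := fun x => Matrix.mul_nonsing_inv _ (hdetU x)
  have hGF : ∀ x : ℝ, G x * F x = 1 := fun x => Matrix.nonsing_inv_mul _ (hdetU x)
  have hEntry : ∀ (i j : Fin 2), Differentiable ℝ (fun s => F s i j) := by
    intro i j x
    exact (stmt16_hasDerivAt_entry (hFd x) i j).differentiableAt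
  have hdet_diff : Differentiable ℝ (fun x => (F x).det) := by
    have h : (fun x => (F x).det) = fun x => F x 0 0 * F x 1 1 - F x 0 1 * F x 1 0 :=
      funext fun x => Matrix.det_fin_two (F x)
    rw [h]
    exact ((hEntry 0 0).mul (hEntry 1 1)).sub ((hEntry 0 1).mul (hEntry 1 0))
  have hG_diff : Differentiable ℝ G := by
    have h : G = fun x => ((F x).det)⁻¹ •
        (!![F x 1 1, -(F x 0 1); -(F x 1 0), F x 0 0] : M2) := by
      funext x
      simp only [hGdef]
      rw [Matrix.inv_def, Matrix.adjugate_fin_two, Ring.inverse_eq_inv']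
    rw [h]
    refine Differentiable.smul (hdet_diff.inv hdet_ne) ?_
    intro x
    exact (stmt16_hasDerivAt_mk (x := x)
      ((hEntry 1 1 x).hasDerivAt) ((hEntry 0 1 x).hasDerivAt.neg)
      ((hEntry 1 0 x).hasDerivAt.neg) ((hEntry 0 0 x).hasDerivAt)).differentiableAt
  have hGd : ∀ x : ℝ, HasDerivAt G (-(KL κ lam x * G x)) x := by
    intro x
    have h1 : HasDerivAt (fun s => F s * G s)
        (F x * KL κ lam x * G x + F x * deriv G x) x :=
      stmt16_hasDerivAt_mul (hFd x) (hG_diff x).hasDerivAt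
    have h2 : (fun s : ℝ => F s * G s) = fun _ => (1 : M2) := funext hFG
    rw [h2] at h1
    have h3 : (0 : M2) = F x * KL κ lam x * G x + F x * deriv G x :=
      (hasDerivAt_const x (1 : M2)).unique h1
    have h4 : deriv G x = -(KL κ lam x * G x) := by
      have h5 : F x * deriv G x = -(F x * KL κ lam x * G x) :=
        eq_neg_of_add_eq_zero_right h3.symm
      calc deriv G x = G x * (F x * deriv G x) := by
            rw [← mul_assoc, hGF x, one_mul]
        _ = -(G x * F x * (KL κ lam x * G x)) := by rw [h5]; noncomm_ring
        _ = -(KL κ lam x * G x) := by rw [hGF x, one_mul]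
    rw [← h4]
    exact (hG_diff x).hasDerivAt
  -- the conservation law
  have key : ∀ x : ℝ, 𝔪 * F x = F x * Q x := by
    set H : ℝ → M2 := fun x => 𝔪 * F x - F x * Q x with hHdef
    have hHd : ∀ x : ℝ, HasDerivAt H (H x * KL κ lam x) x := by
      intro x
      have h1 : HasDerivAt (fun s => 𝔪 * F s) (0 * F x + 𝔪 * (F x * KL κ lam x)) x :=
        stmt16_hasDerivAt_mul (hasDerivAt_const x 𝔪) (hFd x)
      have h2 : HasDerivAt (fun s => F s * Q s)
          (F x * KL κ lam x * Q x + F x * (Q x * KL κ lam x - KL κ lam x * Q x)) x :=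
        stmt16_hasDerivAt_mul (hFd x) (hQd x)
      have h := h1.sub h2
      refine h.congr_deriv ?_
      simp only [hHdef]
      noncomm_ring
    have hH0 : H 0 = 0 := by
      simp only [hHdef]
      rw [h𝔪]
      have : F 0 * Q 0 * (F 0)⁻¹ * F 0 = F 0 * Q 0 := by
        rw [mul_assoc, hGF 0, mul_one]
      rw [this, sub_self]
    have hHG0 : ∀ x : ℝ, H x * G x = 0 := by
      have hd0 : ∀ x : ℝ, HasDerivAt (fun s => H s * G s) 0 x := by
        intro x
        have h := stmt16_hasDerivAt_mul (hHd x) (hGd x)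
        convert h using 1
        noncomm_ring
      have hdiff : Differentiable ℝ (fun s => H s * G s) := fun x => (hd0 x).differentiableAt
      have hderiv0 : ∀ x : ℝ, deriv (fun s => H s * G s) x = 0 := fun x => (hd0 x).deriv
      intro x
      have hc := is_const_of_deriv_eq_zero hdiff hderiv0 x 0
      rw [hc, hH0, zero_mul]
    intro x
    have h := congrArg (fun M : M2 => M * F x) (hHG0 x)
    simp only [zero_mul, mul_assoc, hGF x, mul_one] at h
    have h' : 𝔪 * F x - F x * Q x = 0 := by simpa [hHdef] using h
    exact sub_eq_zero.mp h'
  -- final computation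
  intro s t
  set u : ℝ := s + 2 * l * t with hu
  constructor
  · -- s-derivative
    have hin : HasDerivAt (fun x : ℝ => x + 2 * l * t) 1 s := (hasDerivAt_id s).add_const _
    have hcomp : HasDerivAt (fun x : ℝ => F (x + 2 * l * t)) (F u * KL κ lam u) s := by
      have h : HasDerivAt (fun x : ℝ => F (x + 2 * l * t)) ((1 : ℝ) • (F u * KL κ lam u)) s :=
        (hFd u).scomp s hin
      simpa using h
    have h := stmt16_hasDerivAt_mul (hasDerivAt_const s (NormedSpace.exp (t • 𝔪))) hcomp
    have h' : HasDerivAt (fun x : ℝ => NormedSpace.exp (t • 𝔪) * F (x + 2 * l * t))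
        (NormedSpace.exp (t • 𝔪) * F u * KL κ lam u) s := by
      convert h using 1
      noncomm_ring
    simp only [pdSM]
    exact h'.deriv
  · -- t-derivative
    have h1 : HasDerivAt (fun y : ℝ => NormedSpace.exp (y • 𝔪))
        (𝔪 * NormedSpace.exp (t • 𝔪)) t := stmt16_hasDerivAt_exp 𝔪 t
    have hin : HasDerivAt (fun y : ℝ => s + 2 * l * y) (2 * l) t := by
      simpa using ((hasDerivAt_id t).const_mul (2 * l)).const_add s
    have h2 : HasDerivAt (fun y : ℝ => F (s + 2 * l * y)) ((2 * l) • (F u * KL κ lam u)) t :=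
      (hFd u).scomp t hin
    have h3 := stmt16_hasDerivAt_mul h1 h2
    have h4 : HasDerivAt (fun y : ℝ => NormedSpace.exp (y • 𝔪) * F (s + 2 * l * y))
        (NormedSpace.exp (t • 𝔪) * F u * PL κ lam u) t := by
      convert h3 using 1
      have e1 : 𝔪 * NormedSpace.exp (t • 𝔪) * F u =
          NormedSpace.exp (t • 𝔪) * F u * Q u := by
        rw [stmt16_exp_comm, mul_assoc, key u, ← mul_assoc]
      rw [e1]
      simp only [hQdef]
      simp only [mul_sub, mul_smul_comm, mul_assoc]
      abel
    simp only [pdTM]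
    exact h4.deriv
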